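/- Let q = (q₁,…,qₙ) be a collision-free configuration of point masses m₁,…,mₙ > 0 with center of mass 0 that is a normalized central configuration, i.e. ∇ᵢU_n(q) + mᵢ U_n(q) qᵢ = 0 for all i = 1,…,n. Set λ' = −U_n(q)/Σₖ mₖ, Rᵢⱼ = ‖qᵢ − qⱼ‖, Sᵢⱼ = 1/Rᵢⱼ³ + λ' for i ≠ j and Sᵢᵢ = 0. Then the mutual distances satisfy the Albouy–Chenciner equations: for all 1 ≤ i < j ≤ n, Σₖ₌₁ⁿ mₖ[Sᵢₖ(Rⱼₖ² − Rᵢₖ² − Rᵢⱼ²) + Sⱼₖ(Rᵢₖ² − Rⱼₖ² − Rᵢⱼ²)] = 0. -/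

import Mathlib

open scoped BigOperators
open Matrix

/-- Apply a 2×2 real matrix to a vector in the Euclidean plane. -/
noncomputable def mApply (S : Matrix (Fin 2) (Fin 2) ℝ) (v : EuclideanSpace ℝ (Fin 2)) :
    EuclideanSpace ℝ (Fin 2) :=
  Matrix.toEuclideanLin S v

/-- The Newtonian force function `U_n(q) = ∑_{i<j} mᵢ mⱼ / ‖qⱼ - qᵢ‖`. -/
noncomputable def U {n : ℕ} (m : Fin n → ℝ) (q : Fin n → EuclideanSpace ℝ (Fin 2)) : ℝ :=
  ∑ i : Fin n, ∑ j : Fin n, if i < j then m i * m j / ‖q j - q i‖ else 0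

/-- The gradient of `U_n` with respect to the coordinates of `qᵢ`:
`∇ᵢU_n(q) = ∑_{j ≠ i} mᵢ mⱼ (qⱼ - qᵢ) / ‖qⱼ - qᵢ‖³`. -/
noncomputable def gradU {n : ℕ} (m : Fin n → ℝ) (q : Fin n → EuclideanSpace ℝ (Fin 2))
    (i : Fin n) : EuclideanSpace ℝ (Fin 2) :=
  ∑ j ∈ Finset.univ.erase i, (m i * m j / ‖q j - q i‖ ^ 3) • (q j - q i)

/-- The center of mass `c = (∑ mᵢ)⁻¹ ∑ mᵢ qᵢ`. -/
noncomputable def com {n : ℕ} (m : Fin n → ℝ) (q : Fin n → EuclideanSpace ℝ (Fin 2)) :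
    EuclideanSpace ℝ (Fin 2) :=
  (∑ i, m i)⁻¹ • ∑ i, m i • q i

/-- `q` is a balanced configuration with respect to `S` with parameter `lam`:
`∇ᵢU_n(q) + mᵢ λ S (qᵢ - c) = 0` for all `i`. -/
def IsBalanced {n : ℕ} (m : Fin n → ℝ) (q : Fin n → EuclideanSpace ℝ (Fin 2))
    (S : Matrix (Fin 2) (Fin 2) ℝ) (lam : ℝ) : Prop :=
  ∀ i, gradU m q i + (m i * lam) • mApply S (q i - com m q) = 0

/-- `q` is a central configuration with parameter `lam`:
`∇ᵢU_n(q) + mᵢ λ (qᵢ - c) = 0` for all `i`. -/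
def IsCentral {n : ℕ} (m : Fin n → ℝ) (q : Fin n → EuclideanSpace ℝ (Fin 2))
    (lam : ℝ) : Prop :=
  ∀ i, gradU m q i + (m i * lam) • (q i - com m q) = 0

/-- The `S`-weighted moment of inertia `I_S(q) = ∑ mⱼ (qⱼ - c)ᵀ S (qⱼ - c)`. -/
noncomputable def inertia {n : ℕ} (m : Fin n → ℝ) (q : Fin n → EuclideanSpace ℝ (Fin 2))
    (S : Matrix (Fin 2) (Fin 2) ℝ) : ℝ :=
  ∑ j, m j * inner (𝕜 := ℝ) (q j - com m q) (mApply S (q j - com m q))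

/-- The configuration is collision-free. -/
def CollisionFree {n : ℕ} (q : Fin n → EuclideanSpace ℝ (Fin 2)) : Prop :=
  ∀ i j, i ≠ j → q i ≠ q j

/-! The central configuration equations say that `∑ₖ mₖ Sᵢₖ (qᵢ - qₖ) = 0` for every `i`:
the Newtonian part of `Sᵢₖ` reproduces `∇ᵢU/mᵢ = -U qᵢ`, and the constant part `λ'`
contributes `λ' (∑ mₖ) qᵢ = -U qᵢ` because the center of mass is at the origin. Pairing the
`i`-th equation with `qᵢ - qⱼ` and the `j`-th with `qⱼ - qᵢ`, and expressing the inner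
products through mutual distances by polarization, gives the Albouy–Chenciner equations. -/

open Finset RealInnerProductSpace

theorem two_mul_inner_sub_sub_eq {E : Type*} [NormedAddCommGroup E] [InnerProductSpace ℝ E]
    (a b c : E) : 2 * ⟪a - b, a - c⟫ = ‖a - b‖ ^ 2 + ‖a - c‖ ^ 2 - ‖b - c‖ ^ 2 := by
  have hbc : b - c = (a - c) - (a - b) := by abel
  rw [hbc, norm_sub_sq_real (a - c) (a - b), real_inner_comm]
  ring

theorem sum_smul_sub_eq_of_sum_smul_eq_zero {ι R E : Type*} [Fintype ι] [Ring R]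
    [AddCommGroup E] [Module R E] (m : ι → R) (x : ι → E) (h : ∑ k, m k • x k = 0) (i : ι) :
    ∑ k, m k • (x i - x k) = (∑ k, m k) • x i := by
  simp only [smul_sub, sum_sub_distrib, ← sum_smul, h, sub_zero]

theorem gradU_eq_neg_smul_sum {n : ℕ} (m : Fin n → ℝ) (q : Fin n → EuclideanSpace ℝ (Fin 2))
    (i : Fin n) :
    gradU m q i = -(m i • ∑ k, (m k / ‖q i - q k‖ ^ 3) • (q i - q k)) := by
  rw [gradU, sum_erase univ (by simp), smul_sum, ← sum_neg_distrib]
  refine sum_congr rfl fun k _ => ?_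
  rw [smul_smul, ← smul_neg, neg_sub, norm_sub_rev, mul_div_assoc]

theorem sum_smul_sub_eq_U_smul_of_central {n : ℕ} (m : Fin n → ℝ)
    (q : Fin n → EuclideanSpace ℝ (Fin 2)) {i : Fin n} (hmi : m i ≠ 0)
    (hcc : gradU m q i + (m i * U m q) • q i = 0) :
    ∑ k, (m k / ‖q i - q k‖ ^ 3) • (q i - q k) = U m q • q i := by
  rw [gradU_eq_neg_smul_sum, mul_smul, neg_add_eq_sub, ← smul_sub, smul_eq_zero] at hcc
  exact (sub_eq_zero.mp (hcc.resolve_left hmi)).symm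

theorem sum_mul_smul_sub_eq_zero_of_central {n : ℕ} (m : Fin n → ℝ)
    (q : Fin n → EuclideanSpace ℝ (Fin 2)) (hM : ∑ k, m k ≠ 0) (hcom : ∑ k, m k • q k = 0)
    {i : Fin n} (hmi : m i ≠ 0) (hcc : gradU m q i + (m i * U m q) • q i = 0)
    (S : Fin n → ℝ) (hS : ∀ k, k ≠ i → S k = 1 / ‖q i - q k‖ ^ 3 + -U m q / ∑ k, m k) :
    ∑ k, (m k * S k) • (q i - q k) = 0 := by
  have hterm : ∀ k, (m k * S k) • (q i - q k) = (m k / ‖q i - q k‖ ^ 3) • (q i - q k) +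
      (-U m q / ∑ k, m k) • m k • (q i - q k) := by
    intro k
    rcases eq_or_ne k i with rfl | hk
    · simp
    · rw [hS k hk, smul_smul, ← add_smul]
      ring_nf
  rw [sum_congr rfl fun k _ => hterm k, sum_add_distrib, ← smul_sum,
    sum_smul_sub_eq_U_smul_of_central m q hmi hcc,
    sum_smul_sub_eq_of_sum_smul_eq_zero m q hcom, smul_smul, div_mul_cancel₀ _ hM,
    ← add_smul, add_neg_cancel, zero_smul]

theorem sum_albouyChenciner_eq_inner {ι E : Type*} [Fintype ι] [NormedAddCommGroup E]
    [InnerProductSpace ℝ E] (m : ι → ℝ) (x : ι → E) (S : ι → ι → ℝ) (i j : ι) :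
    ∑ k, m k * (S i k * (‖x j - x k‖ ^ 2 - ‖x i - x k‖ ^ 2 - ‖x i - x j‖ ^ 2) +
        S j k * (‖x i - x k‖ ^ 2 - ‖x j - x k‖ ^ 2 - ‖x i - x j‖ ^ 2)) =
      -2 * (⟪x i - x j, ∑ k, (m k * S i k) • (x i - x k)⟫ +
        ⟪x j - x i, ∑ k, (m k * S j k) • (x j - x k)⟫) := by
  simp only [inner_sum, real_inner_smul_right, ← sum_add_distrib, mul_sum]
  refine sum_congr rfl fun k _ => ?_
  have hi := two_mul_inner_sub_sub_eq (x i) (x j) (x k)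
  have hj := two_mul_inner_sub_sub_eq (x j) (x i) (x k)
  rw [norm_sub_rev (x j) (x i)] at hj
  linear_combination m k * S i k * hi + m k * S j k * hj

theorem albouy_chenciner_general {n : ℕ} (m : Fin n → ℝ)
    (q : Fin n → EuclideanSpace ℝ (Fin 2))
    (hm : ∀ i, 0 < m i)
    (hcom : ∑ i, m i • q i = 0)
    (hcc : ∀ i, gradU m q i + (m i * U m q) • q i = 0)
    (lam' : ℝ) (hlam' : lam' = -U m q / ∑ k, m k)
    (R : Fin n → Fin n → ℝ) (hR : ∀ i j, R i j = ‖q i - q j‖)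
    (Sf : Fin n → Fin n → ℝ)
    (hSf : ∀ i j, Sf i j = if i = j then 0 else 1 / R i j ^ 3 + lam') :
    ∀ i j, i < j →
      ∑ k, m k * (Sf i k * (R j k ^ 2 - R i k ^ 2 - R i j ^ 2) +
        Sf j k * (R i k ^ 2 - R j k ^ 2 - R i j ^ 2)) = 0 := by
  intro i j _
  have hM : ∑ k, m k ≠ 0 := (sum_pos (fun k _ => hm k) ⟨i, mem_univ i⟩).ne'
  have hbalanced : ∀ a, ∑ k, (m k * Sf a k) • (q a - q k) = 0 := fun a =>
    sum_mul_smul_sub_eq_zero_of_central m q hM hcom (hm a).ne' (hcc a) (Sf a) fun k hk => by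
      rw [hSf, if_neg hk.symm, hR, hlam']
  simp only [hR]
  rw [sum_albouyChenciner_eq_inner, hbalanced, hbalanced, inner_zero_right, inner_zero_right,
    add_zero, mul_zero]

/-- A normalized central configuration (center of mass `0`,
`∇ᵢU_n(q) + mᵢ U_n(q) qᵢ = 0`) has mutual distances `Rᵢⱼ = ‖qᵢ - qⱼ‖` satisfying the
Albouy–Chenciner equations with `λ' = -U_n(q) / ∑ mₖ`,
`Sᵢⱼ = 1/Rᵢⱼ³ + λ'` for `i ≠ j`, `Sᵢᵢ = 0`. -/
theorem albouy_chenciner {n : ℕ} (m : Fin n → ℝ)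
    (q : Fin n → EuclideanSpace ℝ (Fin 2))
    (hm : ∀ i, 0 < m i) (hq : CollisionFree q)
    (hcom : ∑ i, m i • q i = 0)
    (hcc : ∀ i, gradU m q i + (m i * U m q) • q i = 0)
    (lam' : ℝ) (hlam' : lam' = -U m q / ∑ k, m k)
    (R : Fin n → Fin n → ℝ) (hR : ∀ i j, R i j = ‖q i - q j‖)
    (Sf : Fin n → Fin n → ℝ)
    (hSf : ∀ i j, Sf i j = if i = j then 0 else 1 / R i j ^ 3 + lam') :
    ∀ i j, i < j →
      ∑ k, m k * (Sf i k * (R j k ^ 2 - R i k ^ 2 - R i j ^ 2) +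
        Sf j k * (R i k ^ 2 - R j k ^ 2 - R i j ^ 2)) = 0 :=
  albouy_chenciner_general m q hm hcom hcc lam' hlam' R hR Sf hSf
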